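/- arXiv:2404.17016 — 2 statements merged into one kernel-verified Lean document; each statement's English description precedes it below -/
import Mathlib

section
/- The functional tr⁺ satisfies the data processing inequality: for any quantum channel Φ (completely positive trace-preserving map), quantum states ρ, σ, and s ∈ ℝ, tr⁺(Φ(σ)s − Φ(ρ)) ≤ tr⁺(σ s − ρ). -/
open scoped ComplexOrder

/-- A quantum state: positive semidefinite with unit trace. -/
def IsState {d : ℕ} (ρ : Matrix (Fin d) (Fin d) ℂ) : Prop :=
  ρ.PosSemidef ∧ ρ.trace = 1

/-- `tr⁺(A) = sup { tr(PA) : 0 ≤ P ≤ 1 }`. -/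
noncomputable def trPlus {d : ℕ} (A : Matrix (Fin d) (Fin d) ℂ) : ℝ :=
  sSup {x : ℝ | ∃ P : Matrix (Fin d) (Fin d) ℂ,
    P.PosSemidef ∧ (1 - P).PosSemidef ∧ x = ((P * A).trace).re}

open scoped MatrixOrder

/-!
For Hermitian `A`, `tr⁺ A = tr A⁺`: any splitting `A = Q - S` with `Q, S ≥ 0` gives
`tr (P A) ≤ tr Q` for `0 ≤ P ≤ 1`, and the spectral projection onto the positive eigenspaces
attains `tr A⁺`. A positive trace-preserving `Φ` turns the Jordan decomposition `A = A⁺ - A⁻`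
into a splitting `Φ A = Φ A⁺ - Φ A⁻` with `tr Φ A⁺ = tr A⁺`, whence `tr⁺ (Φ A) ≤ tr⁺ A`.
-/

namespace Matrix

variable {n : Type*} [Fintype n] [DecidableEq n]

lemma PosSemidef.re_trace_mul_nonneg {P B : Matrix n n ℂ} (hP : P.PosSemidef)
    (hB : B.PosSemidef) : 0 ≤ (P * B).trace.re := by
  obtain ⟨R, rfl⟩ := CStarAlgebra.nonneg_iff_eq_star_mul_self.mp hB.nonneg
  rw [← Matrix.mul_assoc, trace_mul_comm, ← Matrix.mul_assoc]
  exact (Complex.nonneg_iff.mp (hP.mul_mul_conjTranspose_same R).trace_nonneg).1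

lemma PosSemidef.re_trace_mul_le_re_trace {P B : Matrix n n ℂ} (hP1 : (1 - P).PosSemidef)
    (hB : B.PosSemidef) : (P * B).trace.re ≤ B.trace.re := by
  have h := hP1.re_trace_mul_nonneg hB
  rw [Matrix.sub_mul, Matrix.one_mul, trace_sub, Complex.sub_re] at h
  linarith

lemma re_trace_mul_le_of_eq_sub {P A Q S : Matrix n n ℂ} (hP : P.PosSemidef)
    (hP1 : (1 - P).PosSemidef) (hQ : Q.PosSemidef) (hS : S.PosSemidef) (hA : A = Q - S) :
    (P * A).trace.re ≤ Q.trace.re := by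
  rw [hA, Matrix.mul_sub, trace_sub, Complex.sub_re]
  linarith [hP1.re_trace_mul_le_re_trace hQ, hP.re_trace_mul_nonneg hS]

lemma IsHermitian.exists_mul_eq_posPart {A : Matrix n n ℂ} (hA : A.IsHermitian) :
    ∃ P : Matrix n n ℂ, P.PosSemidef ∧ (1 - P).PosSemidef ∧ P * A = A⁺ := by
  let f : ℝ → ℝ := fun x => if 0 < x then 1 else 0
  have hf : ∀ x, f x * x = x⁺ := by
    intro x
    by_cases hx : 0 < x
    · simp [f, hx, hx.le]
    · simp [f, hx, posPart_eq_zero.mpr (not_lt.mp hx)]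
  refine ⟨cfc f A, nonneg_iff_posSemidef.mp (cfc_nonneg fun x _ => ?_),
    le_iff.mp (cfc_le_one f A fun x _ => ?_), ?_⟩
  · by_cases hx : 0 < x <;> simp [f, hx]
  · by_cases hx : 0 < x <;> simp [f, hx]
  · have hcont : ∀ g : ℝ → ℝ, ContinuousOn g (spectrum ℝ A) :=
      finite_real_spectrum.continuousOn
    calc cfc f A * A = cfc f A * cfc id A := by rw [cfc_id ℝ A]
      _ = cfc (fun x => x⁺) A := by
        rw [← cfc_mul f id A (hcont _) (hcont _)]
        exact cfc_congr fun x _ => hf x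
      _ = A⁺ := by rw [CFC.posPart_def, cfcₙ_eq_cfc]

end Matrix

open Matrix

lemma trPlus_le_of_eq_sub {d : ℕ} {A Q S : Matrix (Fin d) (Fin d) ℂ} (hQ : Q.PosSemidef)
    (hS : S.PosSemidef) (hA : A = Q - S) : trPlus A ≤ Q.trace.re := by
  refine Real.sSup_le ?_ (Complex.nonneg_iff.mp hQ.trace_nonneg).1
  rintro x ⟨P, hP, hP1, rfl⟩
  exact re_trace_mul_le_of_eq_sub hP hP1 hQ hS hA

lemma Matrix.IsHermitian.trPlus_eq {d : ℕ} {A : Matrix (Fin d) (Fin d) ℂ}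
    (hA : A.IsHermitian) : trPlus A = (A⁺).trace.re := by
  have hdecomp : A = A⁺ - A⁻ := (CFC.posPart_sub_negPart A hA).symm
  have hQ := (CFC.posPart_nonneg A).posSemidef
  have hS := (CFC.negPart_nonneg A).posSemidef
  refine le_antisymm (trPlus_le_of_eq_sub hQ hS hdecomp) (le_csSup ?_ ?_)
  · refine ⟨(A⁺).trace.re, ?_⟩
    rintro x ⟨P, hP, hP1, rfl⟩
    exact re_trace_mul_le_of_eq_sub hP hP1 hQ hS hdecomp
  · obtain ⟨P, hP, hP1, hPA⟩ := hA.exists_mul_eq_posPart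
    exact ⟨P, hP, hP1, by rw [hPA]⟩

lemma trPlus_map_le {d e : ℕ}
    (Φ : Matrix (Fin d) (Fin d) ℂ →ₗ[ℂ] Matrix (Fin e) (Fin e) ℂ)
    (hpos : ∀ A : Matrix (Fin d) (Fin d) ℂ, A.PosSemidef → (Φ A).PosSemidef)
    (htr : ∀ A : Matrix (Fin d) (Fin d) ℂ, (Φ A).trace = A.trace)
    {A : Matrix (Fin d) (Fin d) ℂ} (hA : A.IsHermitian) : trPlus (Φ A) ≤ trPlus A := by
  rw [hA.trPlus_eq, ← htr]
  refine trPlus_le_of_eq_sub (hpos _ (CFC.posPart_nonneg A).posSemidef)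
    (hpos _ (CFC.negPart_nonneg A).posSemidef) ?_
  rw [← map_sub, CFC.posPart_sub_negPart A hA]

/-- Data processing inequality for `tr⁺`: for a positive trace-preserving linear map Φ,
quantum states ρ, σ and any s ∈ ℝ, `tr⁺(Φ(σ)s − Φ(ρ)) ≤ tr⁺(σs − ρ)`. -/
theorem trPlus_dpi {d e : ℕ}
    (Φ : Matrix (Fin d) (Fin d) ℂ →ₗ[ℂ] Matrix (Fin e) (Fin e) ℂ)
    (hpos : ∀ A : Matrix (Fin d) (Fin d) ℂ, A.PosSemidef → (Φ A).PosSemidef)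
    (htr : ∀ A : Matrix (Fin d) (Fin d) ℂ, (Φ A).trace = A.trace)
    (ρ σ : Matrix (Fin d) (Fin d) ℂ) (hρ : IsState ρ) (hσ : IsState σ) (s : ℝ) :
    trPlus (s • Φ σ - Φ ρ) ≤ trPlus (s • σ - ρ) := by
  have hA : (s • σ - ρ).IsHermitian := (hσ.1.1.smul (IsSelfAdjoint.all s)).sub hρ.1.1
  have hΦ : Φ (s • σ - ρ) = s • Φ σ - Φ ρ := by
    rw [map_sub, LinearMap.map_smul_of_tower]
  exact hΦ ▸ trPlus_map_le Φ hpos htr hA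
end

section
/- For quantum states ρ, σ and 0 < a < b, the estimate ∫_a^b (1/s)·tr⁺(sσ − ρ) ds ≥ tr⁺((b − a)σ + log(a/b)·ρ) holds. -/
/-!
For fixed `0 ≤ P ≤ 1` the map `A ↦ re tr(PA)` is linear, so
`re tr(P((b - a)σ + log(a/b)ρ)) = ∫_a^b s⁻¹ re tr(P(sσ - ρ)) ds ≤ ∫_a^b s⁻¹ tr⁺(sσ - ρ) ds`,
and taking the supremum over `P` gives the estimate. The integral on the right is a genuine
one because `s ↦ tr⁺(sσ - ρ)` is Lipschitz, with constant `tr σ`.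
-/

open scoped ComplexOrder

namespace Matrix

variable {n 𝕜 : Type*} [Fintype n] [RCLike 𝕜]

open scoped MatrixOrder in
theorem PosSemidef.trace_mul_nonneg {X Y : Matrix n n 𝕜} (hX : X.PosSemidef)
    (hY : Y.PosSemidef) : 0 ≤ (X * Y).trace := by
  classical
  obtain ⟨B, rfl⟩ := CStarAlgebra.nonneg_iff_eq_star_mul_self.mp hX.nonneg
  rw [Matrix.mul_assoc, trace_mul_comm]
  exact (hY.mul_mul_conjTranspose_same B).trace_nonneg

theorem PosSemidef.trace_mul_le_trace [DecidableEq n] {P X : Matrix n n 𝕜}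
    (hP : (1 - P).PosSemidef) (hX : X.PosSemidef) : (P * X).trace ≤ X.trace := by
  simpa [Matrix.sub_mul, trace_sub] using hP.trace_mul_nonneg hX

theorem PosSemidef.re_trace_mul_mem_Icc [DecidableEq n] {P X : Matrix n n ℂ} (hP : P.PosSemidef)
    (hP1 : (1 - P).PosSemidef) (hX : X.PosSemidef) :
    (P * X).trace.re ∈ Set.Icc 0 X.trace.re :=
  ⟨(Complex.le_def.mp (hP.trace_mul_nonneg hX)).1,
    (Complex.le_def.mp (hP1.trace_mul_le_trace hX)).1⟩

theorem re_trace_mul_smul_sub (P X Y : Matrix n n ℂ) (t : ℝ) :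
    (P * (t • X - Y)).trace.re = t * (P * X).trace.re - (P * Y).trace.re := by
  simp [Matrix.mul_sub, trace_sub]

theorem re_trace_mul_smul_add_smul (P X Y : Matrix n n ℂ) (u v : ℝ) :
    (P * (u • X + v • Y)).trace.re = u * (P * X).trace.re + v * (P * Y).trace.re := by
  simp [Matrix.mul_add, trace_add]

end Matrix

open Matrix

theorem intervalIntegrable_inv_mul {f : ℝ → ℝ} {a b : ℝ} (ha : 0 < a) (hb : 0 < b)
    (hf : ContinuousOn f (Set.uIcc a b)) :
    IntervalIntegrable (fun s => s⁻¹ * f s) MeasureTheory.volume a b :=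
  ((continuousOn_inv₀.mono fun _ hs => ne_of_mem_of_not_mem hs
    (Set.notMem_uIcc_of_lt ha hb)).mul hf).intervalIntegrable

theorem integral_inv_mul_mul_sub {a b : ℝ} (ha : 0 < a) (hb : 0 < b) (p q : ℝ) :
    ∫ s in a..b, s⁻¹ * (s * p - q) = (b - a) * p + Real.log (a / b) * q := by
  have hinv : IntervalIntegrable (fun s : ℝ => s⁻¹) MeasureTheory.volume a b := by
    simpa using intervalIntegrable_inv_mul ha hb continuousOn_const (f := fun _ => (1 : ℝ))
  have hintegrand : ∀ s ∈ Set.uIcc a b, s⁻¹ * (s * p - q) = p - q * s⁻¹ := fun s hs => by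
    have : s ≠ 0 := ne_of_mem_of_not_mem hs (Set.notMem_uIcc_of_lt ha hb)
    field_simp
  rw [intervalIntegral.integral_congr hintegrand,
    intervalIntegral.integral_sub intervalIntegrable_const (hinv.const_mul q),
    intervalIntegral.integral_const, intervalIntegral.integral_const_mul,
    integral_inv_of_pos ha hb, Real.log_div ha.ne' hb.ne', Real.log_div hb.ne' ha.ne']
  simp only [smul_eq_mul]
  ring

section trPlus

variable {d : ℕ}

theorem trPlus_le {A : Matrix (Fin d) (Fin d) ℂ} {c : ℝ}
    (h : ∀ P : Matrix (Fin d) (Fin d) ℂ, P.PosSemidef → (1 - P).PosSemidef →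
      (P * A).trace.re ≤ c) :
    trPlus A ≤ c :=
  csSup_le ⟨0, 0, .zero, by simpa using PosSemidef.one, by simp⟩ fun _ ⟨P, hP, hP1, hx⟩ =>
    hx ▸ h P hP hP1

variable {σ ρ : Matrix (Fin d) (Fin d) ℂ}

theorem le_trPlus_smul_sub (hσ : σ.PosSemidef) (hρ : ρ.PosSemidef)
    {P : Matrix (Fin d) (Fin d) ℂ} (hP : P.PosSemidef) (hP1 : (1 - P).PosSemidef) (t : ℝ) :
    (P * (t • σ - ρ)).trace.re ≤ trPlus (t • σ - ρ) := by
  refine le_csSup ⟨|t| * σ.trace.re, ?_⟩ ⟨P, hP, hP1, rfl⟩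
  rintro _ ⟨Q, hQ, hQ1, rfl⟩
  obtain ⟨hx0, hxσ⟩ := hQ.re_trace_mul_mem_Icc hQ1 hσ
  have hy0 := (hQ.re_trace_mul_mem_Icc hQ1 hρ).1
  rw [re_trace_mul_smul_sub]
  nlinarith [le_abs_self t, abs_nonneg t]

theorem continuous_trPlus_smul_sub (hσ : σ.PosSemidef) (hρ : ρ.PosSemidef) :
    Continuous fun s : ℝ => trPlus (s • σ - ρ) := by
  refine (LipschitzWith.of_le_add_mul' σ.trace.re fun s t =>
    trPlus_le fun P hP hP1 => ?_).continuous
  obtain ⟨hx0, hxσ⟩ := hP.re_trace_mul_mem_Icc hP1 hσ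
  have ht := le_trPlus_smul_sub hσ hρ hP hP1 t
  rw [re_trace_mul_smul_sub] at ht ⊢
  rw [Real.dist_eq]
  nlinarith [le_abs_self (s - t), abs_nonneg (s - t)]

end trPlus

/-- For quantum states ρ, σ and 0 < a < b:
`∫_a^b (1/s)·tr⁺(sσ − ρ) ds ≥ tr⁺((b − a)σ + log(a/b)·ρ)`. -/
theorem integral_trPlus_ge {d : ℕ} (ρ σ : Matrix (Fin d) (Fin d) ℂ)
    (hρ : IsState ρ) (hσ : IsState σ) (a b : ℝ) (ha : 0 < a) (hab : a < b) :
    trPlus ((b - a) • σ + Real.log (a / b) • ρ)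
      ≤ ∫ s in a..b, s⁻¹ * trPlus (s • σ - ρ) := by
  have hb := ha.trans hab
  refine trPlus_le fun P hP hP1 => ?_
  rw [re_trace_mul_smul_add_smul, ← integral_inv_mul_mul_sub ha hb]
  refine intervalIntegral.integral_mono_on hab.le ?_ ?_ fun s hs => ?_
  · exact intervalIntegrable_inv_mul ha hb (by fun_prop)
  · exact intervalIntegrable_inv_mul ha hb (continuous_trPlus_smul_sub hσ.1 hρ.1).continuousOn
  · rw [← re_trace_mul_smul_sub]
    exact mul_le_mul_of_nonneg_left (le_trPlus_smul_sub hσ.1 hρ.1 hP hP1 s)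
      (inv_nonneg.2 (ha.trans_le hs.1).le)
end
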